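/- arXiv:2507.16650 — 2 statements merged into one kernel-verified Lean document; each statement's English description precedes it below -/
import Mathlib

section
/- Every unlabeled forest on n vertices with more than k ≥ 2 trees can be partitioned into an ordered pair of nonempty forests (F₁, F₂) such that |F₁| + |F₂| = n, F₁ has at least ⌊k/2⌋ vertices, and |F₂| ≥ |F₁|. Consequently, the number of unlabeled forests on n vertices with more than k trees is at most ∑_{ℓ=⌊k/2⌋}^{⌊n/2⌋} f_ℓ·f_{n-ℓ}. -/
open SimpleGraph

/-- The setoid of graph isomorphism on simple graphs on the vertex set `Fin n`. -/
def graphIsoSetoid (n : ℕ) : Setoid (SimpleGraph (Fin n)) where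
  r G H := Nonempty (G ≃g H)
  iseqv := ⟨fun _ => ⟨Iso.refl⟩, fun ⟨e⟩ => ⟨e.symm⟩, fun ⟨e⟩ ⟨f⟩ => ⟨e.trans f⟩⟩

/-- Unlabeled trees on `n` vertices: isomorphism classes of connected acyclic graphs. -/
def UnlabTree (n : ℕ) : Type :=
  Quotient (Setoid.comap (Subtype.val : {G : SimpleGraph (Fin n) // G.Connected ∧ G.IsAcyclic}
    → SimpleGraph (Fin n)) (graphIsoSetoid n))

/-- An unlabeled forest: a multiset of unlabeled trees (each tagged with its size). -/
abbrev Forest : Type := Multiset (Σ n : ℕ, UnlabTree n)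

/-- The size (number of vertices) of a forest. -/
def Forest.size (F : Forest) : ℕ := (Multiset.map Sigma.fst F).sum

/-- The number of unlabeled forests on `m` vertices. -/
noncomputable def f (m : ℕ) : ℕ := Nat.card {F : Forest // F.size = m}

/-!
Sort the trees by size and let `F₁` consist of the `⌊k/2⌋` smallest ones. Every tree has at
least one vertex, so `|F₁| ≥ ⌊k/2⌋`; and since `F₂` has at least as many trees as `F₁`, each
of them at least as large as every tree of `F₁`, also `|F₂| ≥ |F₁|`. The forest is recovered
as `F₁ + F₂`, so the forests in question are counted by the pairs `(F₁, F₂)` with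
`|F₁| = ℓ ∈ [⌊k/2⌋, ⌊n/2⌋]` and `|F₂| = n - ℓ`.
-/

namespace Multiset

theorem exists_add_eq_card_eq_forall_le {α β : Type*} [LinearOrder β] (w : α → β) :
    ∀ {m : ℕ} (s : Multiset α), m ≤ card s →
      ∃ s₁ s₂, s₁ + s₂ = s ∧ card s₁ = m ∧ ∀ a ∈ s₁, ∀ b ∈ s₂, w a ≤ w b
  | 0, s, _ => ⟨0, s, zero_add s, card_zero, by simp⟩
  | m + 1, s, hm => by
    classical
    have hs : s.toFinset.Nonempty := toFinset_nonempty.2 (card_pos.1 (by omega))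
    obtain ⟨a, ha, hmin⟩ := s.toFinset.exists_min_image w hs
    obtain ⟨t, rfl⟩ := exists_cons_of_mem (mem_toFinset.1 ha)
    obtain ⟨t₁, t₂, rfl, hcard, hle⟩ :=
      exists_add_eq_card_eq_forall_le w t (by simpa using hm)
    refine ⟨a ::ₘ t₁, t₂, cons_add a t₁ t₂, by rw [card_cons, hcard], ?_⟩
    rintro x hx b hb
    rcases mem_cons.1 hx with rfl | hx
    · exact hmin b (by simp [hb])
    · exact hle x hx b hb

theorem sum_le_sum_of_card_le_of_forall_le {α : Type*} [AddCommMonoid α] [LinearOrder α]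
    [IsOrderedAddMonoid α] [CanonicallyOrderedAdd α] [OrderBot α] {s t : Multiset α}
    (hcard : card s ≤ card t) (hle : ∀ a ∈ s, ∀ b ∈ t, a ≤ b) : s.sum ≤ t.sum :=
  calc s.sum ≤ card s • s.sup := sum_le_card_nsmul _ _ fun _ ↦ le_sup
    _ ≤ card t • s.sup := nsmul_le_nsmul_left _root_.zero_le hcard
    _ ≤ t.sum := card_nsmul_le_sum fun b hb ↦ sup_le.2 fun a ha ↦ hle a ha b hb

end Multiset

instance (n : ℕ) : Finite (UnlabTree n) :=
  Quotient.finite _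

theorem UnlabTree.pos {n : ℕ} (t : UnlabTree n) : 0 < n :=
  Quotient.inductionOn t fun G ↦ Fin.pos_iff_nonempty.2 G.2.1.nonempty

namespace Forest

theorem size_add (F₁ F₂ : Forest) : (F₁ + F₂).size = F₁.size + F₂.size := by
  simp [Forest.size]

theorem card_le_size (F : Forest) : Multiset.card F ≤ F.size := by
  simpa [Forest.size] using Multiset.card_nsmul_le_sum (s := F.map Sigma.fst) (a := 1)
    (Multiset.forall_mem_map_iff.2 fun a _ ↦ a.2.pos)

theorem le_size_of_mem {F : Forest} {a : Σ n, UnlabTree n} (ha : a ∈ F) : a.1 ≤ F.size :=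
  Multiset.le_sum_of_mem (Multiset.mem_map_of_mem Sigma.fst ha)

theorem finite_setOf_size_eq (m : ℕ) : {F : Forest | F.size = m}.Finite := by
  classical
  have hsmall : {a : Σ n, UnlabTree n | a.1 ≤ m}.Finite :=
    (Set.finite_Iic m).preimage' fun n _ ↦ by
      simpa [Set.preimage, Sigma.ext_iff] using (Set.finite_range (Sigma.mk n : UnlabTree n → _))
  let T : Multiset (Σ n, UnlabTree n) := m • hsmall.toFinset.val
  refine T.powerset.toFinset.finite_toSet.subset fun (F : Forest) (hF : F.size = m) ↦ ?_
  have hsub : F ⊆ hsmall.toFinset.val := fun a ha ↦ by simpa [← hF] using le_size_of_mem ha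
  simpa [T] using (Multiset.le_card_smul_iff_subset.2 hsub).trans
    (nsmul_le_nsmul_left zero_le (hF ▸ card_le_size F))

theorem exists_split (F : Forest) {m : ℕ} (hm : 0 < m) (hmF : 2 * m ≤ Multiset.card F) :
    ∃ F₁ F₂ : Forest, F₁ ≠ 0 ∧ F₂ ≠ 0 ∧ F₁ + F₂ = F ∧ m ≤ F₁.size ∧ F₁.size ≤ F₂.size := by
  obtain ⟨F₁, F₂, rfl, hcard, hle⟩ :=
    Multiset.exists_add_eq_card_eq_forall_le Sigma.fst F (m := m) (by omega)
  have hcard₂ : m ≤ Multiset.card F₂ := by rw [Multiset.card_add] at hmF; omega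
  refine ⟨F₁, F₂, ?_, ?_, rfl, hcard ▸ card_le_size F₁, ?_⟩
  · exact Multiset.card_pos.1 (by omega)
  · exact Multiset.card_pos.1 (by omega)
  · refine Multiset.sum_le_sum_of_card_le_of_forall_le (by simpa [hcard] using hcard₂) ?_
    simp only [Multiset.mem_map]
    rintro _ ⟨a, ha, rfl⟩ _ ⟨b, hb, rfl⟩
    exact hle a ha b hb

theorem ncard_le_sum_of_forall_split {S : Set Forest} {n : ℕ} (I : Finset ℕ)
    (hS : ∀ F ∈ S, F.size = n ∧ ∃ F₁ F₂ : Forest, F₁ + F₂ = F ∧ F₁.size ∈ I) :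
    S.ncard ≤ ∑ ℓ ∈ I, f ℓ * f (n - ℓ) := by
  let pairs := ⋃ ℓ ∈ I, {F : Forest | F.size = ℓ} ×ˢ {F : Forest | F.size = n - ℓ}
  have hpairs : pairs.Finite := I.finite_toSet.biUnion fun ℓ _ ↦
    (finite_setOf_size_eq ℓ).prod (finite_setOf_size_eq (n - ℓ))
  have hsub : S ⊆ (fun p ↦ p.1 + p.2) '' pairs := by
    intro F hF
    obtain ⟨hn, F₁, F₂, rfl, hI⟩ := hS F hF
    refine ⟨(F₁, F₂), Set.mem_biUnion hI ⟨rfl, ?_⟩, rfl⟩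
    change F₂.size = n - F₁.size
    rw [← hn, size_add, Nat.add_sub_cancel_left]
  calc S.ncard ≤ ((fun p ↦ p.1 + p.2) '' pairs).ncard := Set.ncard_le_ncard hsub (hpairs.image _)
    _ ≤ pairs.ncard := Set.ncard_image_le hpairs
    _ ≤ ∑ ℓ ∈ I, ({F : Forest | F.size = ℓ} ×ˢ {F : Forest | F.size = n - ℓ}).ncard :=
      I.set_ncard_biUnion_le _
    _ = ∑ ℓ ∈ I, f ℓ * f (n - ℓ) := by simp only [Set.ncard_prod]; rfl

end Forest

/-- every forest on `n` vertices with more than `k ≥ 2` trees splits into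
an ordered pair of nonempty forests `(F₁, F₂)` with `|F₁| + |F₂| = n`, `|F₁| ≥ ⌊k/2⌋` and
`|F₂| ≥ |F₁|`; consequently, the number of forests on `n` vertices with more than `k`
trees is at most `∑_{ℓ=⌊k/2⌋}^{⌊n/2⌋} f_ℓ f_{n-ℓ}`. -/
theorem forest_split (n k : ℕ) (hk : 2 ≤ k) :
    (∀ F : Forest, F.size = n → k < Multiset.card F →
      ∃ F₁ F₂ : Forest, F₁ ≠ 0 ∧ F₂ ≠ 0 ∧ F₁ + F₂ = F ∧
        F₁.size + F₂.size = n ∧ k / 2 ≤ F₁.size ∧ F₁.size ≤ F₂.size) ∧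
    Nat.card {F : Forest // F.size = n ∧ k < Multiset.card F} ≤
      ∑ ℓ ∈ Finset.Icc (k / 2) (n / 2), f ℓ * f (n - ℓ) := by
  have split : ∀ F : Forest, F.size = n → k < Multiset.card F →
      ∃ F₁ F₂ : Forest, F₁ ≠ 0 ∧ F₂ ≠ 0 ∧ F₁ + F₂ = F ∧
        F₁.size + F₂.size = n ∧ k / 2 ≤ F₁.size ∧ F₁.size ≤ F₂.size := by
    intro F hF hk'
    obtain ⟨F₁, F₂, h₁, h₂, rfl, hle₁, hle₂⟩ := F.exists_split (m := k / 2) (by omega) (by omega)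
    exact ⟨F₁, F₂, h₁, h₂, rfl, by rw [← Forest.size_add, hF], hle₁, hle₂⟩
  refine ⟨split, ?_⟩
  refine Forest.ncard_le_sum_of_forall_split _ fun F ⟨hF, hk'⟩ ↦ ⟨hF, ?_⟩
  obtain ⟨F₁, F₂, -, -, hsum, hn, hle₁, hle₂⟩ := split F hF hk'
  exact ⟨F₁, F₂, hsum, Finset.mem_Icc.2 ⟨hle₁, by omega⟩⟩
end

section
/- Let 0 < α < 1 and suppose t_n ≥ 0 satisfy α^n·n^{5/2}·t_n → β > 0 as n → ∞. Then the sequence τ_n = (α^n/n)·∑_{d|n} d·t_d satisfies τ_n ∼ α^n·t_n as n → ∞, i.e., τ_n/(α^n t_n) → 1. -/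
open Finset Filter

/-- if `0 < α < 1` and `t_n ≥ 0` with `α^n n^{5/2} t_n → β > 0`, then
`τ_n = (α^n/n) ∑_{d∣n} d t_d` satisfies `τ_n ∼ α^n t_n`, i.e. `τ_n/(α^n t_n) → 1`. -/
theorem tau_asymptotic (α β : ℝ) (hα0 : 0 < α) (hα1 : α < 1) (hβ : 0 < β)
    (t : ℕ → ℝ) (ht : ∀ n, 0 ≤ t n)
    (hasy : Tendsto (fun n : ℕ => α ^ n * (n : ℝ) ^ ((5 : ℝ) / 2) * t n)
      atTop (nhds β)) :
    Tendsto
      (fun n : ℕ =>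
        ((α ^ n / n) * ∑ d ∈ n.divisors, (d : ℝ) * t d) / (α ^ n * t n))
      atTop (nhds 1) := by
  set r := Real.sqrt α with hrdef
  have hr0 : 0 < r := Real.sqrt_pos.mpr hα0
  have hr1 : r < 1 := by
    rw [hrdef, show (1:ℝ) = Real.sqrt 1 by simp]
    exact Real.sqrt_lt_sqrt hα0.le hα1
  have hrr : r * r = α := Real.mul_self_sqrt hα0.le
  -- upper bound C for the sequence
  obtain ⟨C, hC⟩ : ∃ C, ∀ n : ℕ, α ^ n * (n : ℝ) ^ ((5:ℝ)/2) * t n ≤ C := by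
    obtain ⟨C, hC⟩ := hasy.bddAbove_range
    exact ⟨C, fun n => hC (Set.mem_range_self n)⟩
  -- eventual lower bound β/2
  obtain ⟨N, hN⟩ : ∃ N : ℕ, ∀ n ≥ N, β/2 < α ^ n * (n : ℝ) ^ ((5:ℝ)/2) * t n :=
    eventually_atTop.mp (hasy.eventually (eventually_gt_nhds (by linarith)))
  have hCpos : 0 < C := lt_of_lt_of_le (by linarith [hN N le_rfl]) (hC N)
  -- squeeze
  have hto : Tendsto (fun n : ℕ => 1 + (2*C/β) * ((n:ℝ)^3 * r^n)) atTop (nhds 1) := by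
    have h0 : Tendsto (fun n : ℕ => (n:ℝ)^3 * r^n) atTop (nhds 0) :=
      tendsto_pow_const_mul_const_pow_of_lt_one 3 hr0.le hr1
    have := (h0.const_mul (2*C/β)).const_add (1:ℝ)
    simpa using this
  apply tendsto_of_tendsto_of_tendsto_of_le_of_le' (tendsto_const_nhds (x := (1:ℝ))) hto
  all_goals
    filter_upwards [eventually_ge_atTop (max N 1)] with n hn
  all_goals
    have hnN : N ≤ n := le_trans (le_max_left _ _) hn
    have hn1 : 1 ≤ n := le_trans (le_max_right _ _) hn
    have hn0 : (0:ℝ) < n := by exact_mod_cast hn1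
    have hu : β/2 < α ^ n * (n : ℝ) ^ ((5:ℝ)/2) * t n := hN n hnN
    have htn : 0 < t n := by
      by_contra h
      push_neg at h
      have h0 : t n = 0 := le_antisymm h (ht n)
      rw [h0, mul_zero] at hu
      linarith
    have hαn : (0:ℝ) < α ^ n := pow_pos hα0 n
    have hmem : n ∈ n.divisors := Nat.mem_divisors_self n (by omega)
    have hS : ∑ d ∈ n.divisors, (d:ℝ) * t d
        = (n:ℝ) * t n + ∑ d ∈ n.divisors.erase n, (d:ℝ) * t d :=
      (Finset.add_sum_erase _ _ hmem).symm
    have hR0 : 0 ≤ ∑ d ∈ n.divisors.erase n, (d:ℝ) * t d :=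
      Finset.sum_nonneg fun d _ => mul_nonneg (by positivity) (ht d)
    have hfe : ((α ^ n / n) * ∑ d ∈ n.divisors, (d : ℝ) * t d) / (α ^ n * t n)
        = (∑ d ∈ n.divisors, (d : ℝ) * t d) / ((n:ℝ) * t n) := by
      field_simp
  -- lower bound
  · rw [hfe, le_div_iff₀ (by positivity), hS]
    nlinarith
  -- upper bound
  · rw [hfe, div_le_iff₀ (by positivity), hS]
    -- bound each proper-divisor term by C / r^n
    have hterm : ∀ d ∈ n.divisors.erase n, (d:ℝ) * t d ≤ C / r^n := by
      intro d hd
      obtain ⟨hdne, hdmem⟩ := Finset.mem_erase.mp hd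
      obtain ⟨hddvd, -⟩ := Nat.mem_divisors.mp hdmem
      have hd1 : 1 ≤ d := Nat.pos_of_dvd_of_pos hddvd (by omega)
      have h2d : 2 * d ≤ n := by
        obtain ⟨k, hk⟩ := hddvd
        have hk2 : 2 ≤ k := by
          rcases Nat.lt_or_ge k 2 with h | h
          · interval_cases k <;> omega
          · exact h
        calc 2 * d = d * 2 := by ring
        _ ≤ d * k := Nat.mul_le_mul_left d hk2
        _ = n := hk.symm
      have hd1R : (1:ℝ) ≤ d := by exact_mod_cast hd1
      have h2 : (d:ℝ) ≤ (d:ℝ) ^ ((5:ℝ)/2) := by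
        calc (d:ℝ) = (d:ℝ) ^ (1:ℝ) := (Real.rpow_one _).symm
        _ ≤ _ := Real.rpow_le_rpow_of_exponent_le hd1R (by norm_num)
      have h3 : r ^ n ≤ α ^ d := by
        have : r ^ n ≤ r ^ (2*d) := pow_le_pow_of_le_one hr0.le hr1.le h2d
        calc r ^ n ≤ r ^ (2*d) := this
        _ = (r*r) ^ d := by rw [pow_mul, sq]
        _ = α ^ d := by rw [hrr]
      rw [le_div_iff₀ (by positivity)]
      have h4 : (d:ℝ) * r ^ n ≤ (d:ℝ) ^ ((5:ℝ)/2) * α ^ d :=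
        mul_le_mul h2 h3 (by positivity) (by positivity)
      have h5 : (d:ℝ) * r ^ n * t d ≤ (d:ℝ) ^ ((5:ℝ)/2) * α ^ d * t d :=
        mul_le_mul_of_nonneg_right h4 (ht d)
      have h6 := hC d
      nlinarith
    have hcard : ((n.divisors.erase n).card : ℝ) ≤ (n:ℝ) := by
      have h1 : (n.divisors.erase n).card ≤ n.divisors.card := Finset.card_erase_le
      have h2 : n.divisors.card ≤ n := by
        have : n.divisors ⊆ Finset.Ico 1 (n+1) := by
          intro d hd
          rw [Finset.mem_Ico]
          exact ⟨Nat.pos_of_mem_divisors hd, Nat.lt_succ_of_le (Nat.divisor_le hd)⟩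
        calc n.divisors.card ≤ (Finset.Ico 1 (n+1)).card := Finset.card_le_card this
        _ = n := by simp
      exact_mod_cast le_trans h1 h2
    have hRn : ∑ d ∈ n.divisors.erase n, (d:ℝ) * t d ≤ (n:ℝ) * (C / r^n) := by
      calc ∑ d ∈ n.divisors.erase n, (d:ℝ) * t d
          ≤ (n.divisors.erase n).card • (C / r^n) := Finset.sum_le_card_nsmul _ _ _ hterm
      _ = ((n.divisors.erase n).card : ℝ) * (C / r^n) := by rw [nsmul_eq_mul]
      _ ≤ (n:ℝ) * (C / r^n) := by
          apply mul_le_mul_of_nonneg_right hcard (by positivity)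
    -- show n * (C / r^n) ≤ (2C/β) * n^3 * r^n * (n * t n)
    have hkey : (n:ℝ) * (C / r^n) ≤ (2*C/β) * ((n:ℝ)^3 * r^n) * ((n:ℝ) * t n) := by
      have hn52 : (n:ℝ) ^ ((5:ℝ)/2) ≤ (n:ℝ)^3 := by
        have h33 : (n:ℝ)^(3:ℕ) = (n:ℝ) ^ ((3:ℕ):ℝ) := (Real.rpow_natCast _ 3).symm
        rw [h33]
        exact Real.rpow_le_rpow_of_exponent_le (by exact_mod_cast hn1) (by norm_num)
      have hα_eq : r ^ n * r ^ n = α ^ n := by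
        rw [← mul_pow, hrr]
      have h2 : α ^ n * (n:ℝ) ^ ((5:ℝ)/2) * t n ≤ α ^ n * (n:ℝ)^3 * t n := by
        have := mul_le_mul_of_nonneg_right (mul_le_mul_of_nonneg_left hn52 hαn.le) htn.le
        linarith [this]
      have h3 : C ≤ (2*C/β) * ((n:ℝ)^3 * α^n * t n) := by
        rw [div_mul_eq_mul_div, le_div_iff₀ hβ]
        nlinarith [hCpos, hu, h2]
      rw [mul_div_assoc', div_le_iff₀ (by positivity : (0:ℝ) < r^n)]
      calc (n:ℝ) * C ≤ (n:ℝ) * ((2*C/β) * ((n:ℝ)^3 * α^n * t n)) :=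
            mul_le_mul_of_nonneg_left h3 hn0.le
      _ = 2*C/β * ((n:ℝ)^3 * r^n) * ((n:ℝ) * t n) * r^n := by rw [← hα_eq]; ring
    nlinarith [hRn, hkey]
end
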